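/- Let q₁,…,q_N be free polynomials in d variables such that each q_i is homogeneous of degree k_i with the degrees k₁,…,k_N pairwise distinct, and ‖q_i‖_{H²} = 1 for each i. Then sup { ‖(q₁ + ⋯ + q_N)(X)‖ : X ∈ C^d } ≥ √N. -/

import Mathlib

/-!
Evaluate on a truncated Fock space. Label a basis of `ℂⁿ` by the words of length at most
`K = max kᵢ` and let `Xᵢ = r Lᵢ`, where `Lᵢ e_w = e_{iw}` is the left creation operator (zero when
`iw` is too long). This tuple has row norm at most `r`, and a polynomial `p` sends the vacuum
`e_∅` to `∑_w p_w r^{|w|} e_w`. The `qᵢ` have disjoint supports, so the vacuum column of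
`(∑ qᵢ)(X)` has squared norm `∑ᵢ r^{2kᵢ} ‖qᵢ‖² ≥ N r^{2K}`; now let `r → 1`.
-/

noncomputable def l2opNorm {m n : Type*} [Fintype m] [Fintype n] [DecidableEq n]
    (A : Matrix m n ℂ) : ℝ :=
  ‖LinearMap.toContinuousLinearMap (Matrix.toEuclideanLin A)‖

abbrev FreePoly (d : ℕ) := MonoidAlgebra ℂ (FreeMonoid (Fin d))

noncomputable def freeEval {d n : ℕ} (X : Fin d → Matrix (Fin n) (Fin n) ℂ) :
    FreePoly d →ₐ[ℂ] Matrix (Fin n) (Fin n) ℂ :=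
  MonoidAlgebra.lift ℂ (Matrix (Fin n) (Fin n) ℂ) (FreeMonoid (Fin d)) (FreeMonoid.lift X)

noncomputable def h2Norm {d : ℕ} (p : FreePoly d) : ℝ :=
  Real.sqrt (∑ w ∈ p.coeff.support, ‖p.coeff w‖ ^ 2)

noncomputable def rowNorm {d n : ℕ} (X : Fin d → Matrix (Fin n) (Fin n) ℂ) : ℝ :=
  l2opNorm (Matrix.of fun (i : Fin n) (p : Fin d × Fin n) => X p.1 i p.2)

noncomputable def matEval {d n a b : ℕ} (δ : Matrix (Fin a) (Fin b) (FreePoly d))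
    (X : Fin d → Matrix (Fin n) (Fin n) ℂ) : Matrix (Fin a × Fin n) (Fin b × Fin n) ℂ :=
  Matrix.of fun p q => freeEval X (δ p.1 q.1) p.2 q.2

theorem norm_sum_sq_eq_sum_norm_sq {ι E : Type*} [SeminormedAddCommGroup E] {s : Finset ι}
    {f : ι → E} (hf : ∀ i ∈ s, ∀ j ∈ s, f i ≠ 0 → f j ≠ 0 → i = j) :
    ‖∑ i ∈ s, f i‖ ^ 2 = ∑ i ∈ s, ‖f i‖ ^ 2 := by
  by_cases h : ∃ i ∈ s, f i ≠ 0
  · obtain ⟨i, hi, hfi⟩ := h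
    have hzero : ∀ j ∈ s, j ≠ i → f j = 0 := fun j hj hji => by
      by_contra hfj
      exact hji (hf j hj i hi hfj hfi)
    rw [Finset.sum_eq_single_of_mem i hi hzero, Finset.sum_eq_single_of_mem i hi
      fun j hj hji => by simp [hzero j hj hji]]
  · simp only [not_exists, not_and, not_not] at h
    have h' : ∀ i ∈ s, ‖f i‖ ^ 2 = 0 := fun i hi => by simp [h i hi]
    simp [Finset.sum_eq_zero h, Finset.sum_eq_zero h']

section L2OpNorm

variable {m n : Type*} [Fintype m] [Fintype n] [DecidableEq n]

theorem sum_norm_sq_le_l2opNorm_sq (A : Matrix m n ℂ) (j : n) :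
    ∑ a, ‖A a j‖ ^ 2 ≤ l2opNorm A ^ 2 := by
  have h := (LinearMap.toContinuousLinearMap (Matrix.toEuclideanLin A)).le_opNorm
    (EuclideanSpace.single j 1)
  rw [PiLp.norm_single, norm_one, mul_one] at h
  calc ∑ a, ‖A a j‖ ^ 2
      = ‖(LinearMap.toContinuousLinearMap (Matrix.toEuclideanLin A))
          (EuclideanSpace.single j 1)‖ ^ 2 := by
        rw [EuclideanSpace.norm_sq_eq]
        simp [Matrix.toLpLin_apply, Matrix.mulVec_single]
    _ ≤ l2opNorm A ^ 2 := pow_le_pow_left₀ (norm_nonneg _) h 2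

theorem l2opNorm_le_of_subsingleton_row_support (A : Matrix m n ℂ) {r : ℝ} (hr : 0 ≤ r)
    (hrow : ∀ a p p', A a p ≠ 0 → A a p' ≠ 0 → p = p')
    (hcol : ∀ p, ∑ a, ‖A a p‖ ^ 2 ≤ r ^ 2) :
    l2opNorm A ≤ r := by
  refine ContinuousLinearMap.opNorm_le_bound _ hr fun x => ?_
  refine le_of_pow_le_pow_left₀ two_ne_zero (by positivity) ?_
  calc ‖(LinearMap.toContinuousLinearMap (Matrix.toEuclideanLin A)) x‖ ^ 2
      = ∑ a, ∑ p, ‖A a p‖ ^ 2 * ‖x p‖ ^ 2 := by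
        rw [EuclideanSpace.norm_sq_eq]
        refine Finset.sum_congr rfl fun a _ => ?_
        simp only [LinearMap.coe_toContinuousLinearMap', Matrix.toLpLin_apply, PiLp.toLp_apply,
          Matrix.mulVec, dotProduct]
        rw [norm_sum_sq_eq_sum_norm_sq fun p _ p' _ hp hp' =>
          hrow a p p' (left_ne_zero_of_mul hp) (left_ne_zero_of_mul hp')]
        simp only [norm_mul, mul_pow]
    _ = ∑ p, (∑ a, ‖A a p‖ ^ 2) * ‖x p‖ ^ 2 := by
        rw [Finset.sum_comm]
        simp only [Finset.sum_mul]
    _ ≤ ∑ p, r ^ 2 * ‖x p‖ ^ 2 :=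
        Finset.sum_le_sum fun p _ => mul_le_mul_of_nonneg_right (hcol p) (by positivity)
    _ = (r * ‖x‖) ^ 2 := by
        rw [mul_pow, EuclideanSpace.norm_sq_eq, Finset.mul_sum]

end L2OpNorm

theorem FreeMonoid.of_mul_inj {α : Type*} {i j : α} {v w : FreeMonoid α} :
    FreeMonoid.of i * v = FreeMonoid.of j * w ↔ i = j ∧ v = w := by
  refine ⟨fun h => ?_, fun ⟨hij, hvw⟩ => hij ▸ hvw ▸ rfl⟩
  have h' := congrArg FreeMonoid.toList h
  rw [FreeMonoid.toList_of_mul, FreeMonoid.toList_of_mul, List.cons.injEq] at h'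
  exact ⟨h'.1, FreeMonoid.toList.injective h'.2⟩

instance {α : Type*} [DecidableEq α] : DecidableEq (FreeMonoid α) :=
  inferInstanceAs (DecidableEq (List α))

section CreationTuple

open FreeMonoid

variable {d n : ℕ} {word : Fin n → FreeMonoid (Fin d)} {r : ℝ}

variable (word r) in
def creationTuple (i : Fin d) : Matrix (Fin n) (Fin n) ℂ :=
  Matrix.of fun a b => if word a = of i * word b then (r : ℂ) else 0

theorem rowNorm_creationTuple_le (hword : word.Injective) (hr : 0 ≤ r) :
    rowNorm (creationTuple word r) ≤ r := by
  refine l2opNorm_le_of_subsingleton_row_support _ hr ?_ fun ⟨i, b⟩ => ?_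
  · rintro a ⟨i, b⟩ ⟨i', b'⟩ h h'
    simp only [creationTuple, Matrix.of_apply, ne_eq, ite_eq_right_iff, Classical.not_imp] at h h'
    obtain ⟨rfl, hb⟩ := of_mul_inj.mp (h.1.symm.trans h'.1)
    rw [hword hb]
  · simp only [creationTuple, Matrix.of_apply, apply_ite (‖·‖ ^ 2), Complex.norm_real,
      Real.norm_of_nonneg hr, norm_zero]
    by_cases h : ∃ a₀, word a₀ = of i * word b
    · obtain ⟨a₀, ha₀⟩ := h
      simp [← ha₀, hword.eq_iff]
    · push Not at h
      simp [h, sq_nonneg]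

theorem lift_creationTuple_apply (hword : word.Injective)
    (hsuff : ∀ a i v, word a = of i * v → v ∈ Set.range word) (u : FreeMonoid (Fin d))
    (a b : Fin n) :
    lift (creationTuple word r) u a b = if word a = u * word b then (r : ℂ) ^ u.length else 0 := by
  induction u using FreeMonoid.inductionOn' generalizing a with
  | one => simp [Matrix.one_apply, hword.eq_iff, eq_comm]
  | of_mul i u ih =>
    simp only [map_mul, lift_eval_of, Matrix.mul_apply, ih, creationTuple, Matrix.of_apply,
      mul_ite, ite_mul, zero_mul, mul_zero, mul_assoc, length_mul, length_of]
    by_cases ha : word a = of i * (u * word b)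
    · obtain ⟨c₀, hc₀⟩ := hsuff a i _ ha
      rw [Finset.sum_eq_single c₀ (fun c _ hc => by simp [← hc₀, hword.eq_iff, hc]) (by simp)]
      simp [hc₀, ha, add_comm 1, pow_succ']
    · simp only [ha, if_false]
      exact Finset.sum_eq_zero fun c _ => by split_ifs with h1 h2 <;> simp_all

theorem freeEval_creationTuple_apply (hword : word.Injective)
    (hsuff : ∀ a i v, word a = of i * v → v ∈ Set.range word) (p : FreePoly d) (a : Fin n)
    {b : Fin n} (hb : word b = 1) :
    freeEval (creationTuple word r) p a b = p.coeff (word a) * (r : ℂ) ^ (word a).length := by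
  simp only [freeEval, MonoidAlgebra.lift_apply, Finsupp.sum, Matrix.sum_apply,
    Matrix.smul_apply, lift_creationTuple_apply hword hsuff, hb, mul_one, smul_eq_mul,
    mul_ite, mul_zero, Finset.sum_ite_eq]
  split_ifs with h
  · rfl
  · simp [Finsupp.notMem_support_iff.mp h]

end CreationTuple

theorem sum_norm_sq_coeff_comp_eq_h2Norm_sq {d : ℕ} {ι : Type*} [Fintype ι]
    {word : ι → FreeMonoid (Fin d)} (hword : word.Injective) {p : FreePoly d}
    (hp : ∀ w ∈ p.coeff.support, w ∈ Set.range word) :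
    ∑ a, ‖p.coeff (word a)‖ ^ 2 = h2Norm p ^ 2 := by
  classical
  rw [h2Norm, Real.sq_sqrt (by positivity),
    ← Finset.sum_image (f := fun w => ‖p.coeff w‖ ^ 2) fun a _ b _ h => hword h]
  refine (Finset.sum_subset (fun w hw => ?_) fun w _ hw => ?_).symm
  · obtain ⟨a, rfl⟩ := hp w hw
    simp
  · simp [Finsupp.notMem_support_iff.mp hw]

theorem norm_coeff_sum_sq_of_injective_degree {d : ℕ} {ι : Type*} [Fintype ι]
    (q : ι → FreePoly d) (k : ι → ℕ) (hhom : ∀ i, ∀ w ∈ (q i).coeff.support, w.length = k i)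
    (hdist : k.Injective) (w : FreeMonoid (Fin d)) :
    ‖(∑ i, q i).coeff w‖ ^ 2 = ∑ i, ‖(q i).coeff w‖ ^ 2 := by
  rw [MonoidAlgebra.coeff_sum, Finset.sum_apply']
  exact norm_sum_sq_eq_sum_norm_sq fun i _ j _ hi hj =>
    hdist ((hhom i w (Finsupp.mem_support_iff.mpr hi)).symm.trans
      (hhom j w (Finsupp.mem_support_iff.mpr hj)))

open Filter Topology in
theorem ofReal_le_of_forall_pow_mul_le {c : ℝ} {s : ENNReal} (K : ℕ)
    (h : ∀ r ∈ Set.Ioo (0 : ℝ) 1, ENNReal.ofReal (r ^ K * c) ≤ s) : ENNReal.ofReal c ≤ s := by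
  have hcont : ContinuousAt (fun r : ℝ => ENNReal.ofReal (r ^ K * c)) 1 :=
    ENNReal.continuous_ofReal.continuousAt.comp (by fun_prop)
  have hlim : Tendsto (fun r : ℝ => ENNReal.ofReal (r ^ K * c)) (𝓝[<] 1) (𝓝 (ENNReal.ofReal c)) := by
    simpa using hcont.tendsto.mono_left nhdsWithin_le_nhds
  exact le_of_tendsto hlim (eventually_of_mem (Ioo_mem_nhdsLT zero_lt_one) h)

theorem pow_mul_sqrt_card_le_l2opNorm_freeEval {d n : ℕ} {ι : Type*} [Fintype ι]
    (q : ι → FreePoly d) (k : ι → ℕ) (hhom : ∀ i, ∀ w ∈ (q i).coeff.support, w.length = k i)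
    (hdist : k.Injective) (hnorm : ∀ i, h2Norm (q i) = 1) {K : ℕ} (hk : ∀ i, k i ≤ K)
    {word : Fin n → FreeMonoid (Fin d)} (hword : word.Injective)
    (hsuff : ∀ a i v, word a = FreeMonoid.of i * v → v ∈ Set.range word)
    (hsupp : ∀ i, ∀ w ∈ (q i).coeff.support, w ∈ Set.range word) {b : Fin n} (hb : word b = 1)
    {r : ℝ} (hr₀ : 0 ≤ r) (hr₁ : r ≤ 1) :
    r ^ K * √(Fintype.card ι) ≤ l2opNorm (freeEval (creationTuple word r) (∑ i, q i)) := by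
  have hterm : ∀ i a, ‖(q i).coeff (word a)‖ ^ 2 * ‖(r : ℂ) ^ (word a).length‖ ^ 2
      = (r ^ 2) ^ k i * ‖(q i).coeff (word a)‖ ^ 2 := by
    intro i a
    by_cases h : (q i).coeff (word a) = 0
    · simp [h]
    · rw [hhom i _ (Finsupp.mem_support_iff.mpr h), norm_pow, Complex.norm_real,
        Real.norm_of_nonneg hr₀, ← pow_mul, ← pow_mul, mul_comm, mul_comm 2]
  refine le_of_pow_le_pow_left₀ two_ne_zero (norm_nonneg _) ?_
  calc (r ^ K * √(Fintype.card ι)) ^ 2 = ∑ _i : ι, (r ^ 2) ^ K := by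
        rw [mul_pow, Real.sq_sqrt (Nat.cast_nonneg _), Finset.sum_const, Finset.card_univ,
          nsmul_eq_mul, ← pow_mul, ← pow_mul, mul_comm, mul_comm 2]
    _ ≤ ∑ i, (r ^ 2) ^ k i := Finset.sum_le_sum fun i _ =>
        pow_le_pow_of_le_one (sq_nonneg r) (pow_le_one₀ hr₀ hr₁) (hk i)
    _ = ∑ a, ‖freeEval (creationTuple word r) (∑ i, q i) a b‖ ^ 2 := by
        simp only [freeEval_creationTuple_apply hword hsuff _ _ hb, norm_mul, mul_pow,
          norm_coeff_sum_sq_of_injective_degree q k hhom hdist, Finset.sum_mul, hterm]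
        rw [Finset.sum_comm]
        simp only [← Finset.mul_sum, sum_norm_sq_coeff_comp_eq_h2Norm_sq hword (hsupp _), hnorm,
          one_pow, mul_one]
    _ ≤ l2opNorm (freeEval (creationTuple word r) (∑ i, q i)) ^ 2 :=
        sum_norm_sq_le_l2opNorm_sq _ b

/-- If q₁,…,q_N are homogeneous of pairwise distinct degrees and each has
H² norm 1, then the sup of ‖(q₁+⋯+q_N)(X)‖ over the row ball is at least √N. -/
theorem stmt7 (d N : ℕ) (q : Fin N → FreePoly d) (k : Fin N → ℕ)
    (hhom : ∀ i, ∀ w ∈ (q i).coeff.support, FreeMonoid.length w = k i)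
    (hdist : Function.Injective k)
    (hnorm : ∀ i, h2Norm (q i) = 1) :
    ENNReal.ofReal (Real.sqrt N) ≤
      ⨆ (n : ℕ) (X : Fin d → Matrix (Fin n) (Fin n) ℂ) (_ : rowNorm X < 1),
        ENNReal.ofReal (l2opNorm (freeEval X (∑ i, q i))) := by
  set K := Finset.univ.sup k
  obtain ⟨n, word, hword, hrange⟩ :=
    ((List.finite_length_le (Fin d) K).preimage FreeMonoid.toList.injective.injOn).fin_param
  have hmem : ∀ w, w ∈ Set.range word ↔ w.length ≤ K := fun w => by
    rw [hrange]
    rfl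
  obtain ⟨b, hb⟩ := (hmem 1).2 (Nat.zero_le K)
  have hsuff : ∀ a i v, word a = FreeMonoid.of i * v → v ∈ Set.range word := fun a i v h => by
    have := (hmem (word a)).1 ⟨a, rfl⟩
    rw [h, FreeMonoid.length_mul] at this
    exact (hmem v).2 (by omega)
  have hsupp : ∀ i, ∀ w ∈ (q i).coeff.support, w ∈ Set.range word := fun i w hw =>
    (hmem w).2 ((hhom i w hw).trans_le (Finset.le_sup (Finset.mem_univ i)))
  refine ofReal_le_of_forall_pow_mul_le K fun r hr => ?_
  refine le_iSup₂_of_le n (creationTuple word r)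
    (le_iSup_of_le ((rowNorm_creationTuple_le hword hr.1.le).trans_lt hr.2) ?_)
  refine ENNReal.ofReal_le_ofReal ?_
  simpa using pow_mul_sqrt_card_le_l2opNorm_freeEval q k hhom hdist hnorm
    (fun i => Finset.le_sup (Finset.mem_univ i)) hword hsuff hsupp hb hr.1.le hr.2.le
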